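/- arXiv:2006.03518 — 2 statements merged into one kernel-verified Lean document; each statement's English description precedes it below -/
import Mathlib

section
/- Existence and uniqueness for the discrete backward time-fractional Hamilton–Jacobi–Bellman scheme: Let g be a numerical Hamiltonian that is continuous in q and satisfies (G1) (nonincreasing in q₁ and q₃, nondecreasing in q₂ and q₄). Given grid functions F⁰,…,F^{N−1} and a terminal grid datum Uᴺ, there exists a unique family of grid functions (Uⁿ)_{n=0}^{N−1} satisfying D̄^α_{Δt}Uⁿ_{i,j} − (Δ_hUⁿ)_{i,j} + g(x_{i,j}, [D_hUⁿ]_{i,j}) = Fⁿ_{i,j} for all n = 0,…,N−1 and all grid indices (i,j). -/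
open Real Finset

noncomputable section

/-- forward L1 coefficients `c_k^n` -/
def cF (α : ℝ) (n k : ℕ) : ℝ :=
  if k = 0 then (n : ℝ) ^ (1 - α) - ((n : ℝ) - 1) ^ (1 - α)
  else 2 * ((n : ℝ) - k) ^ (1 - α) - ((n : ℝ) + 1 - k) ^ (1 - α) - ((n : ℝ) - 1 - k) ^ (1 - α)

/-- backward L1 coefficients `c̄_n^k` (with horizon `N`) -/
def cB (α : ℝ) (N n k : ℕ) : ℝ :=
  if k = N then ((N : ℝ) - n) ^ (1 - α) - ((N : ℝ) - 1 - n) ^ (1 - α)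
  else 2 * ((k : ℝ) - n) ^ (1 - α) - ((k : ℝ) + 1 - n) ^ (1 - α) - ((k : ℝ) - 1 - n) ^ (1 - α)

/-- `ρ_α = Γ(2-α) Δt^α` -/
def rhoA (α Δt : ℝ) : ℝ := Real.Gamma (2 - α) * Δt ^ α

/-- discrete forward Caputo derivative (L1 scheme) -/
def DF (α Δt : ℝ) (w : ℕ → ℝ) (n : ℕ) : ℝ :=
  (rhoA α Δt)⁻¹ * (w n - ∑ k ∈ Finset.range n, cF α n k * w k)

/-- discrete backward Caputo derivative (L1 scheme) -/
def DB (α Δt : ℝ) (N : ℕ) (w : ℕ → ℝ) (n : ℕ) : ℝ :=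
  (rhoA α Δt)⁻¹ * (w n - ∑ k ∈ Finset.Icc (n + 1) N, cB α N n k * w k)

/-- grid functions on the uniform periodic grid of the 2-torus -/
abbrev GridFun (Nh : ℕ) := ZMod Nh → ZMod Nh → ℝ

/-- mesh step `h = 1/N_h` -/
def hstep (Nh : ℕ) : ℝ := (Nh : ℝ)⁻¹

/-- grid point `x_{i,j} = (i h, j h)` -/
def gridPt (Nh : ℕ) (i j : ZMod Nh) : ℝ × ℝ :=
  ((i.val : ℝ) * hstep Nh, (j.val : ℝ) * hstep Nh)

/-- forward difference in the first variable -/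
def D1p (Nh : ℕ) (U : GridFun Nh) (i j : ZMod Nh) : ℝ := (U (i + 1) j - U i j) / hstep Nh

/-- forward difference in the second variable -/
def D2p (Nh : ℕ) (U : GridFun Nh) (i j : ZMod Nh) : ℝ := (U i (j + 1) - U i j) / hstep Nh

/-- the discrete gradient `[D_h U]_{i,j} ∈ ℝ⁴` -/
def Dh (Nh : ℕ) (U : GridFun Nh) (i j : ZMod Nh) : Fin 4 → ℝ :=
  ![D1p Nh U i j, D1p Nh U (i - 1) j, D2p Nh U i j, D2p Nh U i (j - 1)]

/-- five point discrete Laplacian -/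
def lapl (Nh : ℕ) (U : GridFun Nh) (i j : ZMod Nh) : ℝ :=
  -(4 * U i j - U (i + 1) j - U (i - 1) j - U i (j + 1) - U i (j - 1)) / (hstep Nh) ^ 2

/-- the scalar product `(U,V)₂ = h² Σ_{i,j} U_{i,j} V_{i,j}` -/
def inner2 (Nh : ℕ) [NeZero Nh] (U V : GridFun Nh) : ℝ :=
  (hstep Nh) ^ 2 * ∑ i : ZMod Nh, ∑ j : ZMod Nh, U i j * V i j

/-- the set `𝒦_h` of discrete probability measures -/
def Kh (Nh : ℕ) [NeZero Nh] : Set (GridFun Nh) :=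
  {M | (∀ i j, 0 ≤ M i j) ∧ inner2 Nh M (fun _ _ => 1) = 1}

/-- partial derivative `∂_{q_k} g(q)` -/
def gq (g : (Fin 4 → ℝ) → ℝ) (q : Fin 4 → ℝ) (k : Fin 4) : ℝ :=
  fderiv ℝ g q (Pi.single k 1)

/-- (G1): `g` nonincreasing in `q₁, q₃` and nondecreasing in `q₂, q₄` -/
def G1 (g : (Fin 4 → ℝ) → ℝ) : Prop :=
  (∀ q : Fin 4 → ℝ, Antitone fun s => g (Function.update q 0 s)) ∧
  (∀ q : Fin 4 → ℝ, Monotone fun s => g (Function.update q 1 s)) ∧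
  (∀ q : Fin 4 → ℝ, Antitone fun s => g (Function.update q 2 s)) ∧
  (∀ q : Fin 4 → ℝ, Monotone fun s => g (Function.update q 3 s))

/-- the discrete transport operator `𝓑_{i,j}(U,M)` -/
def Bop (Nh : ℕ) (g : ZMod Nh → ZMod Nh → (Fin 4 → ℝ) → ℝ) (U M : GridFun Nh)
    (i j : ZMod Nh) : ℝ :=
  (hstep Nh)⁻¹ *
    (M i j * gq (g i j) (Dh Nh U i j) 0 - M (i - 1) j * gq (g (i - 1) j) (Dh Nh U (i - 1) j) 0
     + M (i + 1) j * gq (g (i + 1) j) (Dh Nh U (i + 1) j) 1 - M i j * gq (g i j) (Dh Nh U i j) 1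
     + M i j * gq (g i j) (Dh Nh U i j) 2 - M i (j - 1) * gq (g i (j - 1)) (Dh Nh U i (j - 1)) 2
     + M i (j + 1) * gq (g i (j + 1)) (Dh Nh U i (j + 1)) 3 - M i j * gq (g i j) (Dh Nh U i j) 3)

/-!
The backward L1 derivative at level `n` involves only the levels `n, …, N`, so the levels are
determined one after the other from `N` down to `0`. At each level the unknown `X` solves a
stationary problem `c X - Δ_h X + g(x, D_h X) = b` with `c = ρ_α⁻¹ > 0`. Its operator is
degenerate elliptic (by (G1) it is nonincreasing in the values at the other grid points) and
adding a constant to `X` adds `c` times that constant to the operator. At a maximum point of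
`X - Y` this yields a comparison principle, hence uniqueness. For existence, solve the scalar
equation at each grid point with the other values frozen: this is a monotone map on grid
functions which maps the interval between a constant subsolution and a constant supersolution
into itself, so Tarski's theorem gives a fixed point, which is a solution.
-/

theorem exists_fixed_point_of_monotone_of_le_of_le {α : Type*} [ConditionallyCompleteLattice α]
    {f : α → α} (hf : Monotone f) {a b : α} (hab : a ≤ b) (ha : a ≤ f a) (hb : f b ≤ b) :
    ∃ x, f x = x := by
  have : Fact (a ≤ b) := ⟨hab⟩
  let F : Set.Icc a b →o Set.Icc a b :=
    ⟨fun x => ⟨f x, ha.trans (hf x.2.1), (hf x.2.2).trans hb⟩, fun _ _ h => hf h⟩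
  exact ⟨_, congrArg Subtype.val F.map_lfp⟩

section BackwardRecursion

variable {X : Type*} {N : ℕ} {xN : X} {P : ℕ → (ℕ → X) → Prop}

theorem exists_backward_solution
    (hlocal : ∀ n < N, ∀ U V : ℕ → X, (∀ k, n ≤ k → k ≤ N → U k = V k) → P n U → P n V)
    (hstep : ∀ n < N, ∀ U : ℕ → X, ∃ x, P n (Function.update U n x)) :
    ∃ U : ℕ → X, U N = xN ∧ ∀ n < N, P n U := by
  suffices ∀ m ≤ N, ∃ U : ℕ → X, U N = xN ∧ ∀ n, m ≤ n → n < N → P n U by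
    obtain ⟨U, hUN, hU⟩ := this 0 N.zero_le
    exact ⟨U, hUN, fun n hn => hU n n.zero_le hn⟩
  intro m hm
  induction hm using Nat.decreasingInduction with
  | self => exact ⟨fun _ => xN, rfl, fun n hNn hnN => absurd hnN (not_lt.2 hNn)⟩
  | of_succ k hk ih =>
    obtain ⟨U, hUN, hU⟩ := ih
    obtain ⟨x, hx⟩ := hstep k hk U
    refine ⟨Function.update U k x, by rw [Function.update_of_ne hk.ne', hUN],
      fun n hkn hnN => ?_⟩
    rcases hkn.eq_or_lt with rfl | hlt
    · exact hx
    · exact hlocal n hnN U _ (fun j hnj _ => (Function.update_of_ne (by omega) _ _).symm)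
        (hU n hlt hnN)

theorem eq_of_backward_solution
    (hlocal : ∀ n < N, ∀ U V : ℕ → X, (∀ k, n ≤ k → k ≤ N → U k = V k) → P n U → P n V)
    (hstep : ∀ n < N, ∀ (U : ℕ → X) (x y : X),
      P n (Function.update U n x) → P n (Function.update U n y) → x = y)
    {U V : ℕ → X} (hU : U N = xN ∧ ∀ n < N, P n U) (hV : V N = xN ∧ ∀ n < N, P n V) :
    ∀ n ≤ N, V n = U n := by
  intro m hm
  suffices ∀ n, m ≤ n → n ≤ N → V n = U n from this m le_rfl hm
  induction hm using Nat.decreasingInduction with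
  | self => intro n hNn hnN; rw [le_antisymm hnN hNn, hV.1, hU.1]
  | of_succ k hk ih =>
    intro n hkn hnN
    rcases hkn.eq_or_lt with rfl | hlt
    · have hVk : P k (Function.update U k (V k)) := by
        refine hlocal k hk V _ (fun j hkj hjN => ?_) (hV.2 k hk)
        rcases hkj.eq_or_lt with rfl | hlt
        · rw [Function.update_self]
        · rw [Function.update_of_ne hlt.ne', ih j hlt hjN]
      have hUk : P k (Function.update U k (U k)) := by
        rw [Function.update_eq_self]; exact hU.2 k hk
      exact hstep k hk U _ _ hVk hUk
    · exact ih n hlt hnN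

end BackwardRecursion

section MonotoneScheme

variable {ι : Type*}

def DegenerateElliptic (A : (ι → ℝ) → ι → ℝ) : Prop :=
  ∀ ⦃X Y : ι → ℝ⦄ ⦃p : ι⦄, X ≤ Y → X p = Y p → A Y p ≤ A X p

def ShiftEquivariant (A : (ι → ℝ) → ι → ℝ) (c : ℝ) : Prop :=
  ∀ (X : ι → ℝ) (δ : ℝ) (p : ι), A (fun q => X q + δ) p = A X p + c * δ

namespace DegenerateElliptic

variable {A : (ι → ℝ) → ι → ℝ} {c : ℝ}

theorem le_of_apply_le [Finite ι] (hA : DegenerateElliptic A) (hs : ShiftEquivariant A c)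
    (hc : 0 < c) {X Y : ι → ℝ} (hXY : ∀ p, A X p ≤ A Y p) : X ≤ Y := by
  intro q
  have : Nonempty ι := ⟨q⟩
  obtain ⟨p, hp⟩ := Finite.exists_max fun p => X p - Y p
  set δ := X p - Y p
  have hδ : A Y p + c * δ ≤ A Y p :=
    calc A Y p + c * δ = A (fun r => Y r + δ) p := (hs Y δ p).symm
      _ ≤ A X p := hA (fun r => by linarith [hp r]) (by ring)
      _ ≤ A Y p := hXY p
  nlinarith [hp q]

theorem injective [Finite ι] (hA : DegenerateElliptic A) (hs : ShiftEquivariant A c)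
    (hc : 0 < c) : Function.Injective A := fun _ _ h =>
  le_antisymm (hA.le_of_apply_le hs hc fun p => (congrFun h p).le)
    (hA.le_of_apply_le hs hc fun p => (congrFun h p).ge)

variable [DecidableEq ι]

theorem apply_update_add_mul_le (hA : DegenerateElliptic A) (hs : ShiftEquivariant A c)
    (X : ι → ℝ) (p : ι) {s t : ℝ} (hst : s ≤ t) :
    A (Function.update X p s) p + c * (t - s) ≤ A (Function.update X p t) p := by
  rw [← hs]
  refine hA (fun q => ?_) (by simp)
  rcases eq_or_ne q p with rfl | hq
  · simp
  · simp only [Function.update_of_ne hq]; linarith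

theorem strictMono_apply_update (hA : DegenerateElliptic A) (hs : ShiftEquivariant A c)
    (hc : 0 < c) (X : ι → ℝ) (p : ι) : StrictMono fun s => A (Function.update X p s) p :=
  fun s t hst => by
    have := hA.apply_update_add_mul_le hs X p hst.le
    nlinarith

theorem surjective_apply_update (hA : DegenerateElliptic A) (hs : ShiftEquivariant A c)
    (hc : 0 < c) (hcont : Continuous A) (X : ι → ℝ) (p : ι) :
    Function.Surjective fun s => A (Function.update X p s) p := by
  set f := fun s => A (Function.update X p s) p
  have hf : Continuous f :=
    (continuous_apply p).comp (hcont.comp (continuous_const.update p continuous_id))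
  refine hf.surjective ?_ ?_
  · refine Filter.tendsto_atTop_mono' _ ?_ <|
      Filter.tendsto_atTop_add_const_left _ (f 0) (Filter.tendsto_id.const_mul_atTop hc)
    filter_upwards [Filter.eventually_ge_atTop 0] with s hs0
    simpa using hA.apply_update_add_mul_le hs X p hs0
  · refine Filter.tendsto_atBot_mono' _ ?_ <|
      Filter.tendsto_atBot_add_const_left _ (f 0) (Filter.tendsto_id.const_mul_atBot hc)
    filter_upwards [Filter.eventually_le_atBot 0] with s hs0
    have := hA.apply_update_add_mul_le hs X p hs0
    simp only [f, id] at this ⊢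
    linarith

theorem surjective [Fintype ι] (hA : DegenerateElliptic A) (hs : ShiftEquivariant A c)
    (hc : 0 < c) (hcont : Continuous A) : Function.Surjective A := by
  intro b
  choose Φ hΦ using fun X p => hA.surjective_apply_update hs hc hcont X p (b p)
  have le_Φ_iff : ∀ X p s, s ≤ Φ X p ↔ A (Function.update X p s) p ≤ b p := fun X p s => by
    rw [← hΦ X p]; exact (hA.strictMono_apply_update hs hc X p).le_iff_le.symm
  have Φ_le_iff : ∀ X p s, Φ X p ≤ s ↔ b p ≤ A (Function.update X p s) p := fun X p s => by
    rw [← hΦ X p]; exact (hA.strictMono_apply_update hs hc X p).le_iff_le.symm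
  have hmono : Monotone Φ := fun X Y hXY p => by
    rw [le_Φ_iff, ← hΦ X p]
    exact hA (update_le_update_iff.2 ⟨le_rfl, fun q _ => hXY q⟩) (by simp)
  -- `c t` dominates every `|b p - A 0 p|`, so the constants `∓ t` are a sub- and a
  -- supersolution.
  set t := (∑ p, |b p - A 0 p|) / c
  have hbound : ∀ p, |b p - A 0 p| ≤ c * t := fun p => by
    rw [mul_div_cancel₀ _ hc.ne']
    exact Finset.single_le_sum (fun q _ => abs_nonneg (b q - A 0 q)) (Finset.mem_univ p)
  have hconst : ∀ s p, A (fun _ => s) p = A 0 p + c * s := fun s p => by simpa using hs 0 s p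
  have hlo : (fun _ => -t) ≤ Φ (fun _ => -t) := fun p => by
    rw [le_Φ_iff, Function.update_eq_self, hconst]
    linarith [neg_abs_le (b p - A 0 p), hbound p]
  have hhi : Φ (fun _ => t) ≤ fun _ => t := fun p => by
    rw [Φ_le_iff, Function.update_eq_self, hconst]
    linarith [le_abs_self (b p - A 0 p), hbound p]
  have ht : 0 ≤ t := by positivity
  obtain ⟨X, hX⟩ := exists_fixed_point_of_monotone_of_le_of_le hmono
    (fun _ => by linarith) hlo hhi
  exact ⟨X, funext fun p => by simpa [hX] using hΦ X p⟩

theorem bijective [Fintype ι] (hA : DegenerateElliptic A) (hs : ShiftEquivariant A c)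
    (hc : 0 < c) (hcont : Continuous A) : Function.Bijective A :=
  ⟨hA.injective hs hc, hA.surjective hs hc hcont⟩

end DegenerateElliptic

end MonotoneScheme

theorem G1.apply_le_apply {g : (Fin 4 → ℝ) → ℝ} (hg : G1 g) {q q' : Fin 4 → ℝ}
    (h0 : q' 0 ≤ q 0) (h1 : q 1 ≤ q' 1) (h2 : q' 2 ≤ q 2) (h3 : q 3 ≤ q' 3) : g q ≤ g q' := by
  obtain ⟨hg0, hg1, hg2, hg3⟩ := hg
  set r₁ := Function.update q 0 (q' 0)
  set r₂ := Function.update r₁ 1 (q' 1)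
  set r₃ := Function.update r₂ 2 (q' 2)
  have hr₃ : Function.update r₃ 3 (q' 3) = q' := by
    funext k; fin_cases k <;> simp [r₁, r₂, r₃]
  calc g q ≤ g r₁ := by simpa using hg0 q h0
    _ ≤ g r₂ := by simpa using hg1 r₁ (by simpa [r₁] using h1 : r₁ 1 ≤ q' 1)
    _ ≤ g r₃ := by simpa using hg2 r₂ (by simpa [r₁, r₂] using h2 : q' 2 ≤ r₂ 2)
    _ ≤ g q' := by
      simpa [hr₃] using hg3 r₃ (by simpa [r₁, r₂, r₃] using h3 : r₃ 3 ≤ q' 3)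

section Grid

variable {Nh : ℕ}

theorem hstep_nonneg (Nh : ℕ) : 0 ≤ hstep Nh := inv_nonneg.2 (Nat.cast_nonneg Nh)

theorem lapl_add_const (U : GridFun Nh) (δ : ℝ) (i j : ZMod Nh) :
    lapl Nh (fun i j => U i j + δ) i j = lapl Nh U i j := by
  unfold lapl; ring_nf

theorem Dh_add_const (U : GridFun Nh) (δ : ℝ) (i j : ZMod Nh) :
    Dh Nh (fun i j => U i j + δ) i j = Dh Nh U i j := by
  funext k; fin_cases k <;> simp [Dh, D1p, D2p]

def hjbStage (g : ZMod Nh → ZMod Nh → (Fin 4 → ℝ) → ℝ) (c : ℝ) (X : ZMod Nh × ZMod Nh → ℝ)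
    (p : ZMod Nh × ZMod Nh) : ℝ :=
  c * X p - lapl Nh (Function.curry X) p.1 p.2 + g p.1 p.2 (Dh Nh (Function.curry X) p.1 p.2)

variable {g : ZMod Nh → ZMod Nh → (Fin 4 → ℝ) → ℝ} {c : ℝ}

theorem degenerateElliptic_hjbStage (hg : ∀ i j, G1 (g i j)) :
    DegenerateElliptic (hjbStage g c) := by
  rintro X Y ⟨i, j⟩ hXY hp
  have hnb : ∀ q, X q - X (i, j) ≤ Y q - Y (i, j) := fun q => by linarith [hXY q]
  have hlapl : lapl Nh (Function.curry X) i j ≤ lapl Nh (Function.curry Y) i j := by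
    refine div_le_div_of_nonneg_right ?_ (sq_nonneg _)
    simp only [Function.curry]
    linarith [hnb (i + 1, j), hnb (i - 1, j), hnb (i, j + 1), hnb (i, j - 1)]
  have hDh : g i j (Dh Nh (Function.curry Y) i j) ≤ g i j (Dh Nh (Function.curry X) i j) := by
    refine (hg i j).apply_le_apply ?_ ?_ ?_ ?_ <;>
      simp only [Dh, D1p, D2p, Function.curry, sub_add_cancel, Fin.isValue, Matrix.cons_val,
        Matrix.cons_val_zero, Matrix.cons_val_one] <;>
      refine div_le_div_of_nonneg_right ?_ (hstep_nonneg Nh)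
    · linarith [hnb (i + 1, j)]
    · linarith [hnb (i - 1, j)]
    · linarith [hnb (i, j + 1)]
    · linarith [hnb (i, j - 1)]
  simp only [hjbStage]
  rw [hp]
  linarith

theorem shiftEquivariant_hjbStage : ShiftEquivariant (hjbStage g c) c := by
  rintro X δ ⟨i, j⟩
  simp only [hjbStage]
  rw [show Function.curry (fun q => X q + δ) = fun i j => Function.curry X i j + δ from rfl,
    lapl_add_const, Dh_add_const]
  ring

theorem continuous_hjbStage (hgc : ∀ i j, Continuous (g i j)) : Continuous (hjbStage g c) := by
  refine continuous_pi fun p => ?_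
  have hDh : Continuous fun X : ZMod Nh × ZMod Nh → ℝ => Dh Nh (Function.curry X) p.1 p.2 := by
    simp only [Dh, D1p, D2p, Function.curry_apply]; fun_prop
  have hlapl : Continuous fun X : ZMod Nh × ZMod Nh → ℝ =>
      lapl Nh (Function.curry X) p.1 p.2 := by
    simp only [lapl, Function.curry_apply]; fun_prop
  exact ((continuous_const.mul (continuous_apply p)).sub hlapl).add ((hgc p.1 p.2).comp hDh)

theorem existsUnique_hjbStage [NeZero Nh] (hc : 0 < c) (hgc : ∀ i j, Continuous (g i j))
    (hg : ∀ i j, G1 (g i j)) (b : GridFun Nh) :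
    ∃! W : GridFun Nh, ∀ i j, c * W i j - lapl Nh W i j + g i j (Dh Nh W i j) = b i j := by
  have hbij := (degenerateElliptic_hjbStage hg).bijective shiftEquivariant_hjbStage hc
    (continuous_hjbStage hgc)
  refine (existsUnique_congr fun W => ?_).1
    ((hbij.comp (Equiv.curry _ _ ℝ).symm.bijective).existsUnique (Function.uncurry b))
  simp [funext_iff, hjbStage]

end Grid

theorem rhoA_pos {α Δt : ℝ} (hα : α < 2) (hΔt : 0 < Δt) : 0 < rhoA α Δt :=
  mul_pos (Real.Gamma_pos_of_pos (by linarith)) (Real.rpow_pos_of_pos hΔt α)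

section BackwardCaputo

variable {α Δt : ℝ} {N n : ℕ}

theorem DB_congr (hn : n ≤ N) {w w' : ℕ → ℝ} (h : ∀ k, n ≤ k → k ≤ N → w k = w' k) :
    DB α Δt N w n = DB α Δt N w' n := by
  unfold DB
  rw [h n le_rfl hn, Finset.sum_congr rfl fun k hk => by
    rw [h k (Nat.le_of_succ_le (Finset.mem_Icc.1 hk).1) (Finset.mem_Icc.1 hk).2]]

theorem DB_update_self (w : ℕ → ℝ) (x : ℝ) :
    DB α Δt N (Function.update w n x) n
      = (rhoA α Δt)⁻¹ * (x - ∑ k ∈ Finset.Icc (n + 1) N, cB α N n k * w k) := by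
  unfold DB
  rw [Function.update_self, Finset.sum_congr rfl fun k hk => by
    rw [Function.update_of_ne (Nat.succ_le_iff.1 (Finset.mem_Icc.1 hk).1).ne']]

end BackwardCaputo

/-- Existence and uniqueness for the discrete backward time-fractional HJB scheme. -/
theorem HJB_existence_uniqueness (α Δt : ℝ) (hα : α ∈ Set.Ioo (0 : ℝ) 1)
    (hΔt : 0 < Δt) (N Nh : ℕ) [NeZero Nh]
    (g : ZMod Nh → ZMod Nh → (Fin 4 → ℝ) → ℝ)
    (hgc : ∀ i j, Continuous (g i j)) (hg1 : ∀ i j, G1 (g i j))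
    (F : ℕ → GridFun Nh) (UN : GridFun Nh) :
    ∃ U : ℕ → GridFun Nh,
      (U N = UN ∧ ∀ n < N, ∀ i j,
          DB α Δt N (fun m => U m i j) n - lapl Nh (U n) i j
            + g i j (Dh Nh (U n) i j) = F n i j) ∧
      ∀ V : ℕ → GridFun Nh,
        (V N = UN ∧ ∀ n < N, ∀ i j,
          DB α Δt N (fun m => V m i j) n - lapl Nh (V n) i j
            + g i j (Dh Nh (V n) i j) = F n i j) →
        ∀ n ≤ N, V n = U n := by
  have hc : 0 < (rhoA α Δt)⁻¹ := inv_pos.2 (rhoA_pos (hα.2.trans one_lt_two) hΔt)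
  set P : ℕ → (ℕ → GridFun Nh) → Prop := fun n U => ∀ i j,
    DB α Δt N (fun m => U m i j) n - lapl Nh (U n) i j + g i j (Dh Nh (U n) i j) = F n i j
  have hlocal : ∀ n < N, ∀ U V : ℕ → GridFun Nh, (∀ k, n ≤ k → k ≤ N → U k = V k) →
      P n U → P n V := by
    intro n hn U V hUV hU i j
    rw [← hU i j, DB_congr hn.le fun k hnk hkN => congrFun₂ (hUV k hnk hkN) i j,
      hUV n le_rfl hn.le]
  have hstep : ∀ n < N, ∀ U, ∃! W, P n (Function.update U n W) := by
    intro n _ U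
    refine (existsUnique_congr fun W => forall₂_congr fun i j => ?_).1
      (existsUnique_hjbStage hc hgc hg1 fun i j =>
        F n i j + (rhoA α Δt)⁻¹ * ∑ k ∈ Finset.Icc (n + 1) N, cB α N n k * U k i j)
    have hcoord : (fun m => Function.update U n W m i j)
        = Function.update (fun m => U m i j) n (W i j) :=
      funext fun m => Function.apply_update (fun _ V => V i j) U n W m
    rw [hcoord, DB_update_self, Function.update_self]
    constructor <;> intro h <;> linarith
  obtain ⟨U, hU⟩ := exists_backward_solution hlocal fun n hn U => (hstep n hn U).exists
  exact ⟨U, hU, fun V hV =>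
    eq_of_backward_solution hlocal (fun n hn U _ _ => (hstep n hn U).unique) hU hV⟩
end
end

section
/- Discrete fractional integration by parts: Fix α ∈ (0,1), Δt > 0, an integer N ≥ 1, and set ρ_α := Γ(2−α)·Δt^α. For any two families of grid functions U = (Uⁿ)_{n=0}^N and M = (Mⁿ)_{n=0}^N, one has Σ_{n=0}^{N−1} (D̄^α_{Δt}Uⁿ, M^{n+1})₂ + ρ_α^{−1} Σ_{n=0}^{N−1} c̄_n^N (Uᴺ, M^{n+1})₂ = Σ_{n=0}^{N−1} (D^α_{Δt}M^{n+1}, Uⁿ)₂ + ρ_α^{−1} Σ_{n=0}^{N−1} c_0^{n+1} (M⁰, Uⁿ)₂. -/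
/-!
By bilinearity of `(·,·)₂` both sides are linear combinations of the pairings `(Uᵏ, Mᵐ)₂`.
The boundary terms cancel the `k = N` summand of the backward derivative and the `k = 0`
summand of the forward one. The remaining double sums run over the same pairs `n < k < N`,
and there the coefficients agree: `c̄_n^k = c_{n+1}^{k+1}`.
-/

open Real Finset

noncomputable section

section InnerProduct

variable {Nh : ℕ} [NeZero Nh]

lemma inner2_comm (U V : GridFun Nh) :
    inner2 Nh U V = inner2 Nh V U := by
  simp only [inner2, mul_comm (U _ _)]

def inner2Left (V : GridFun Nh) : GridFun Nh →ₗ[ℝ] ℝ where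
  toFun U := inner2 Nh U V
  map_add' U W := by simp only [inner2, Pi.add_apply, add_mul, sum_add_distrib, mul_add]
  map_smul' a U := by
    simp only [inner2, Pi.smul_apply, smul_eq_mul, RingHom.id_apply, mul_sum, mul_assoc,
      mul_left_comm]

lemma inner2_mul_sub_sum_left {ι : Type*} (a : ℝ) (f : GridFun Nh)
    (s : Finset ι) (c : ι → ℝ) (g : ι → GridFun Nh) (V : GridFun Nh) :
    inner2 Nh (fun i j => a * (f i j - ∑ k ∈ s, c k * g k i j)) V
      = a * (inner2 Nh f V - ∑ k ∈ s, c k * inner2 Nh (g k) V) := by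
  have hfun : (fun i j => a * (f i j - ∑ k ∈ s, c k * g k i j))
      = a • (f - ∑ k ∈ s, c k • g k) := by
    ext i j
    simp only [Pi.smul_apply, Pi.sub_apply, Finset.sum_apply, smul_eq_mul]
  calc inner2 Nh (fun i j => a * (f i j - ∑ k ∈ s, c k * g k i j)) V
      = inner2Left V (a • (f - ∑ k ∈ s, c k • g k)) := by rw [hfun]; rfl
    _ = a * (inner2 Nh f V - ∑ k ∈ s, c k * inner2 Nh (g k) V) := by
      simp only [map_smul, map_sub, map_sum, smul_eq_mul]; rfl

end InnerProduct

lemma cB_eq_cF (α : ℝ) {N k : ℕ} (n : ℕ) (hk : k ≠ N) :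
    cB α N n k = cF α (k + 1) (n + 1) := by
  rw [cB, cF, if_neg hk, if_neg n.succ_ne_zero]
  push_cast
  ring_nf

lemma sum_range_sum_Ioo_comm {M : Type*} [AddCommMonoid M] (N : ℕ) (f : ℕ → ℕ → M) :
    ∑ n ∈ range N, ∑ k ∈ Ioo n N, f n k = ∑ k ∈ range N, ∑ n ∈ range k, f n k :=
  sum_comm' fun n k => by simp only [mem_range, mem_Ioo]; omega

lemma sum_Icc_cB_mul (α : ℝ) {N n : ℕ} (hn : n < N) (q : ℕ → ℝ) :
    ∑ k ∈ Icc (n + 1) N, cB α N n k * q k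
      = ∑ k ∈ Ioo n N, cF α (k + 1) (n + 1) * q k + cB α N n N * q N := by
  rw [Icc_add_one_left_eq_Ioc, ← Ioo_insert_right hn, sum_insert right_notMem_Ioo,
    add_comm]
  congr 1
  exact sum_congr rfl fun k hk => by rw [cB_eq_cF α n (mem_Ioo.1 hk).2.ne]

lemma l1_summation_by_parts (α : ℝ) (N : ℕ) (Q : ℕ → ℕ → ℝ) :
    ∑ n ∈ range N, (Q n (n + 1) - ∑ k ∈ Icc (n + 1) N, cB α N n k * Q k (n + 1))
        + ∑ n ∈ range N, cB α N n N * Q N (n + 1)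
      = ∑ n ∈ range N, (Q n (n + 1) - ∑ k ∈ range (n + 1), cF α (n + 1) k * Q n k)
        + ∑ n ∈ range N, cF α (n + 1) 0 * Q n 0 := by
  have hB : ∀ n ∈ range N, ∑ k ∈ Icc (n + 1) N, cB α N n k * Q k (n + 1)
      = ∑ k ∈ Ioo n N, cF α (k + 1) (n + 1) * Q k (n + 1) + cB α N n N * Q N (n + 1) :=
    fun n hn => sum_Icc_cB_mul α (mem_range.1 hn) _
  have hF : ∀ n ∈ range N, ∑ k ∈ range (n + 1), cF α (n + 1) k * Q n k
      = ∑ k ∈ range n, cF α (n + 1) (k + 1) * Q n (k + 1) + cF α (n + 1) 0 * Q n 0 :=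
    fun n _ => sum_range_succ' _ n
  simp only [sum_sub_distrib, sum_congr rfl hB, sum_congr rfl hF, sum_add_distrib,
    sum_range_sum_Ioo_comm N fun n k => cF α (k + 1) (n + 1) * Q k (n + 1)]
  ring

theorem discrete_fractional_integration_by_parts_general (α Δt : ℝ)
    (N : ℕ) (Nh : ℕ) [NeZero Nh] (U M : ℕ → GridFun Nh) :
    (∑ n ∈ Finset.range N,
        inner2 Nh (fun i j => DB α Δt N (fun m => U m i j) n) (M (n + 1)))
      + (rhoA α Δt)⁻¹ * ∑ n ∈ Finset.range N, cB α N n N * inner2 Nh (U N) (M (n + 1))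
    = (∑ n ∈ Finset.range N,
        inner2 Nh (fun i j => DF α Δt (fun m => M m i j) (n + 1)) (U n))
      + (rhoA α Δt)⁻¹ * ∑ n ∈ Finset.range N, cF α (n + 1) 0 * inner2 Nh (M 0) (U n) := by
  simp only [DB, DF, inner2_mul_sub_sum_left, inner2_comm (M _) (U _)]
  rw [← mul_sum, ← mul_sum, ← mul_add, ← mul_add]
  exact congrArg _ (l1_summation_by_parts α N fun a b => inner2 Nh (U a) (M b))

/-- Discrete fractional integration by parts for the L1 forward/backward
discrete Caputo derivatives. -/
theorem discrete_fractional_integration_by_parts (α Δt : ℝ)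
    (hα : α ∈ Set.Ioo (0 : ℝ) 1) (hΔt : 0 < Δt)
    (N : ℕ) (hN : 1 ≤ N) (Nh : ℕ) [NeZero Nh] (U M : ℕ → GridFun Nh) :
    (∑ n ∈ Finset.range N,
        inner2 Nh (fun i j => DB α Δt N (fun m => U m i j) n) (M (n + 1)))
      + (rhoA α Δt)⁻¹ * ∑ n ∈ Finset.range N, cB α N n N * inner2 Nh (U N) (M (n + 1))
    = (∑ n ∈ Finset.range N,
        inner2 Nh (fun i j => DF α Δt (fun m => M m i j) (n + 1)) (U n))
      + (rhoA α Δt)⁻¹ * ∑ n ∈ Finset.range N, cF α (n + 1) 0 * inner2 Nh (M 0) (U n) :=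
  discrete_fractional_integration_by_parts_general α Δt N Nh U M
end
end
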